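/- Let α ≥ 0, γ ≥ 1 be real and β ∈ ℂ with γ+α > |β|. Then Σ_{n=1}^∞ (n+1)|A_n| ≤ 2|β|/(γ+α−|β|), where A_n = β^n Γ(γ+α)/Γ((γ+α)(n+1)). -/

import Mathlib

open Complex

noncomputable def rabA (α γ : ℝ) (β : ℂ) (n : ℕ) : ℂ :=
  β ^ n * (Real.Gamma (γ + α) : ℂ) / (Real.Gamma ((γ + α) * (n + 1)) : ℂ)

noncomputable def rab (α γ : ℝ) (β : ℂ) (z : ℂ) : ℂ :=
  z + ∑' k : ℕ, rabA α γ β (k + 1) * z ^ (k + 2)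

noncomputable def rabPartial (α γ : ℝ) (β : ℂ) (m : ℕ) (z : ℂ) : ℂ :=
  z + ∑ k ∈ Finset.range m, rabA α γ β (k + 1) * z ^ (k + 2)

noncomputable def rabD (α γ : ℝ) (β : ℂ) (z : ℂ) : ℂ :=
  1 + ∑' k : ℕ, ((k : ℂ) + 2) * rabA α γ β (k + 1) * z ^ (k + 1)

noncomputable def rabDPartial (α γ : ℝ) (β : ℂ) (m : ℕ) (z : ℂ) : ℂ :=
  1 + ∑ k ∈ Finset.range m, ((k : ℂ) + 2) * rabA α γ β (k + 1) * z ^ (k + 1)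

noncomputable def rabAlex (α γ : ℝ) (β : ℂ) (z : ℂ) : ℂ :=
  z + ∑' k : ℕ, rabA α γ β (k + 1) / ((k : ℂ) + 2) * z ^ (k + 2)

noncomputable def rabAlexPartial (α γ : ℝ) (β : ℂ) (m : ℕ) (z : ℂ) : ℂ :=
  z + ∑ k ∈ Finset.range m, rabA α γ β (k + 1) / ((k : ℂ) + 2) * z ^ (k + 2)

/-! With x = γ + α ≥ 1, the recursion Γ(y + 1) = y Γ(y) together with the monotonicity of Γ on
[2, ∞) gives Γ(x(n + 1)) ≥ Γ(x) xⁿ n!, hence |A_n| ≤ qⁿ / n! with q = |β| / x < 1.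
As n + 1 ≤ 2 n!, the series is dominated by Σ 2 qⁿ⁺¹ = 2q / (1 - q). -/

open scoped Nat

theorem Nat.succ_le_two_mul_factorial (n : ℕ) : n + 1 ≤ 2 * n ! := by
  rcases n.eq_zero_or_pos with rfl | hn
  · simp
  · linarith [n.self_le_factorial]

namespace Real

theorem mul_Gamma_le_Gamma_add {y s : ℝ} (hy : 1 ≤ y) (hs : 1 ≤ s) :
    y * Gamma y ≤ Gamma (y + s) := by
  rw [← Gamma_add_one (by linarith)]
  exact Gamma_strictMonoOn_Ici.monotoneOn (Set.mem_Ici.2 (by linarith))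
    (Set.mem_Ici.2 (by linarith)) (by linarith)

theorem Gamma_mul_pow_mul_factorial_le_Gamma {x : ℝ} (hx : 1 ≤ x) (n : ℕ) :
    Gamma x * (x ^ n * n !) ≤ Gamma (x * (n + 1)) := by
  induction n with
  | zero => simp
  | succ n ih =>
    have hy : 1 ≤ x * (n + 1) := one_le_mul_of_one_le_of_one_le hx (by simp)
    calc Gamma x * (x ^ (n + 1) * (n + 1)!)
        = x * (n + 1) * (Gamma x * (x ^ n * n !)) := by
          push_cast [Nat.factorial_succ]; ring
      _ ≤ x * (n + 1) * Gamma (x * (n + 1)) := by gcongr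
      _ ≤ Gamma (x * (n + 1) + x) := mul_Gamma_le_Gamma_add hy hx
      _ = Gamma (x * ((n + 1 : ℕ) + 1)) := by push_cast; ring_nf

end Real

theorem norm_rabA_le {α γ : ℝ} (β : ℂ) (h : 1 ≤ γ + α) (n : ℕ) :
    ‖rabA α γ β n‖ ≤ (‖β‖ / (γ + α)) ^ n / n ! := by
  have hΓ : 0 < Real.Gamma (γ + α) := Real.Gamma_pos_of_pos (by linarith)
  have hΓn : 0 < Real.Gamma ((γ + α) * (n + 1)) := Real.Gamma_pos_of_pos (by positivity)
  rw [rabA, norm_div, norm_mul, norm_pow, norm_real, norm_real, Real.norm_of_nonneg hΓ.le,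
    Real.norm_of_nonneg hΓn.le, div_pow, div_div, div_le_div_iff₀ hΓn (by positivity)]
  calc ‖β‖ ^ n * Real.Gamma (γ + α) * ((γ + α) ^ n * n !)
      = ‖β‖ ^ n * (Real.Gamma (γ + α) * ((γ + α) ^ n * n !)) := by ring
    _ ≤ ‖β‖ ^ n * Real.Gamma ((γ + α) * (n + 1)) := by
      gcongr; exact Real.Gamma_mul_pow_mul_factorial_le_Gamma h n

theorem succ_mul_norm_rabA_le {α γ : ℝ} (β : ℂ) (h : 1 ≤ γ + α) (n : ℕ) :
    (n + 1) * ‖rabA α γ β n‖ ≤ 2 * (‖β‖ / (γ + α)) ^ n := by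
  have hfac : (n + 1 : ℝ) ≤ 2 * n ! := by exact_mod_cast n.succ_le_two_mul_factorial
  calc (n + 1) * ‖rabA α γ β n‖ ≤ (2 * n !) * ((‖β‖ / (γ + α)) ^ n / n !) := by
        gcongr
        exact norm_rabA_le β h n
    _ = 2 * (‖β‖ / (γ + α)) ^ n := by field_simp

theorem rabA_deriv_sum_bound (α γ : ℝ) (β : ℂ) (hα : 0 ≤ α) (hγ : 1 ≤ γ)
    (hβ : ‖β‖ < γ + α) :
    (∑' k : ℕ, ((k : ℝ) + 2) * ‖rabA α γ β (k + 1)‖) ≤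
      2 * ‖β‖ / (γ + α - ‖β‖) := by
  have h : 1 ≤ γ + α := by linarith
  set q := ‖β‖ / (γ + α) with hq
  have hq0 : 0 ≤ q := by positivity
  have hq1 : q < 1 := (div_lt_one (by linarith)).2 hβ
  have hterm (k : ℕ) : ((k : ℝ) + 2) * ‖rabA α γ β (k + 1)‖ ≤ 2 * q * q ^ k := by
    have := succ_mul_norm_rabA_le β h (k + 1)
    push_cast at this
    linarith [pow_succ' q k]
  have hgeom : HasSum (fun k : ℕ ↦ 2 * q * q ^ k) (2 * q * (1 - q)⁻¹) :=
    (hasSum_geometric_of_lt_one hq0 hq1).mul_left (2 * q)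
  calc (∑' k : ℕ, ((k : ℝ) + 2) * ‖rabA α γ β (k + 1)‖) ≤ 2 * q * (1 - q)⁻¹ :=
        hasSum_le hterm
          (hgeom.summable.of_nonneg_of_le (fun k ↦ by positivity) hterm).hasSum hgeom
    _ = 2 * ‖β‖ / (γ + α - ‖β‖) := by
      rw [hq]; field_simp
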